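/- Let a, b ∈ H be non-real quaternions not lying on the same sphere (i.e. (Re(a), |Im(a)|) ≠ (Re(b), |Im(b)|)). Then the zero set of p(x) = x² - x(a+b) + ab in H is exactly {a, (b - a^c)⁻¹ b (b - a^c)}, and these two zeros are distinct. -/

import Mathlib

/-!
Write `p x = x * (x - a) - (x - a) * b`. A root `x ≠ a` is therefore conjugate to `b`, so it has
the real part and norm of `b` and satisfies `b`'s real quadratic `x² - 2 Re(b) x + |b|² = 0`.
Subtracting that quadratic from `p` leaves `x q^c - q^c b` with `q = b - a^c`, whence
`x = q^c b (q^c)⁻¹ = q⁻¹ b q`; the computation reverses, so `q⁻¹ b q` is a root. It differs from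
`a` because a conjugate of `b` lies on the sphere of `b`, and `q ≠ 0` for the same reason.
-/

open Quaternion

namespace Quaternion

section CommRing

variable {R : Type*} [CommRing R]

theorem re_mul_comm (a b : ℍ[R]) : (a * b).re = (b * a).re := by
  simp only [re_mul]; ring

theorem normSq_eq_re_sq_add_normSq_im (a : ℍ[R]) : normSq a = a.re ^ 2 + normSq a.im := by
  simp only [normSq_def', re_im, imI_im, imJ_im, imK_im]; ring

theorem sq_sub_two_re_mul_add_normSq (a : ℍ[R]) :
    a ^ 2 - ((2 * a.re : R) : ℍ[R]) * a + ((normSq a : R) : ℍ[R]) = 0 := by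
  rw [← self_add_star', ← star_mul_self, sq, add_mul]; abel

theorem sq_sub_mul_add_mul_eq_add_mul_star_sub_star_mul (a b x : ℍ[R]) :
    x ^ 2 - x * (a + b) + a * b =
      (x ^ 2 - ((2 * b.re : R) : ℍ[R]) * x + ((normSq b : R) : ℍ[R]))
        + (x * star (b - star a) - star (b - star a) * b) := by
  rw [coe_commutes, ← self_add_star', ← star_mul_self, star_sub, star_star]
  noncomm_ring

end CommRing

theorem norm_im_eq_of_re_eq_of_normSq_eq {a b : ℍ} (hre : a.re = b.re)
    (hn : normSq a = normSq b) : ‖a.im‖ = ‖b.im‖ := by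
  rw [normSq_eq_re_sq_add_normSq_im a, normSq_eq_re_sq_add_normSq_im b, hre, add_right_inj,
    normSq_eq_norm_mul_self, normSq_eq_norm_mul_self] at hn
  exact mul_self_inj (norm_nonneg _) (norm_nonneg _) |>.1 hn

section Field

variable {R : Type*} [Field R] [LinearOrder R] [IsStrictOrderedRing R]

theorem re_eq_and_normSq_eq_of_mul_eq {u x y : ℍ[R]} (hu : u ≠ 0) (h : u * x = y * u) :
    x.re = y.re ∧ normSq x = normSq y := by
  have hx : x = u⁻¹ * (y * u) := by rw [← h, inv_mul_cancel_left₀ hu]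
  constructor
  · rw [hx, re_mul_comm, mul_assoc, mul_inv_cancel₀ hu, mul_one]
  · have := congrArg normSq h
    rw [map_mul, map_mul, mul_comm (normSq y)] at this
    exact mul_left_cancel₀ (normSq_ne_zero.2 hu) this

theorem mul_star_eq_star_mul_iff {q x y : ℍ[R]} (hq : q ≠ 0) :
    x * star q = star q * y ↔ x = q⁻¹ * y * q := by
  have hstar : star q = normSq q • q⁻¹ := by
    rw [inv_def, smul_smul, mul_inv_cancel₀ (normSq_ne_zero.2 hq), one_smul]
  rw [hstar, mul_smul_comm, smul_mul_assoc, smul_right_injective _ (normSq_ne_zero.2 hq) |>.eq_iff,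
    mul_inv_eq_iff_eq_mul₀ hq, mul_assoc]

theorem sq_sub_mul_add_mul_eq_zero_iff {a b x : ℍ[R]} (hq : b - star a ≠ 0) :
    x ^ 2 - x * (a + b) + a * b = 0 ↔ x = a ∨ x = (b - star a)⁻¹ * b * (b - star a) := by
  have hfactor : x ^ 2 - x * (a + b) + a * b = x * (x - a) - (x - a) * b := by noncomm_ring
  rw [← mul_star_eq_star_mul_iff hq]
  constructor
  · intro hx
    by_cases hxa : x = a
    · exact .inl hxa
    have hconj : (x - a) * b = x * (x - a) := (sub_eq_zero.1 (hfactor ▸ hx)).symm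
    obtain ⟨hre, hn⟩ := re_eq_and_normSq_eq_of_mul_eq (sub_ne_zero.2 hxa) hconj
    rw [sq_sub_mul_add_mul_eq_add_mul_star_sub_star_mul, hre, hn, sq_sub_two_re_mul_add_normSq,
      zero_add, sub_eq_zero] at hx
    exact .inr hx
  · rintro (rfl | hx)
    · noncomm_ring
    · obtain ⟨hre, hn⟩ := re_eq_and_normSq_eq_of_mul_eq (star_ne_zero.2 hq) hx.symm
      rw [sq_sub_mul_add_mul_eq_add_mul_star_sub_star_mul, hre, hn, sq_sub_two_re_mul_add_normSq,
        hx, sub_self, add_zero]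

end Field

end Quaternion

theorem zero_set_different_spheres_general (a b : Quaternion ℝ)
    (hsphere : ¬(a.re = b.re ∧ ‖a.im‖ = ‖b.im‖)) :
    ({x : Quaternion ℝ | x ^ 2 - x * (a + b) + a * b = 0}
      = {a, (b - star a)⁻¹ * b * (b - star a)}) ∧
    a ≠ (b - star a)⁻¹ * b * (b - star a) := by
  have hq : b - star a ≠ 0 := by
    rw [sub_ne_zero]
    rintro rfl
    exact hsphere ⟨(re_star a).symm, by rw [im_star, norm_neg]⟩
  refine ⟨Set.ext fun x => sq_sub_mul_add_mul_eq_zero_iff hq, fun h => hsphere ?_⟩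
  obtain ⟨hre, hn⟩ :=
    re_eq_and_normSq_eq_of_mul_eq (star_ne_zero.2 hq) ((mul_star_eq_star_mul_iff hq).2 h).symm
  exact ⟨hre.symm, norm_im_eq_of_re_eq_of_normSq_eq hre.symm hn.symm⟩

/-- If the non-real quaternions `a, b` do not lie on the same sphere, then the zero set of
`x² - x(a+b) + ab` is exactly `{a, (b - a^c)⁻¹ b (b - a^c)}`, and these zeros are distinct. -/
theorem zero_set_different_spheres (a b : Quaternion ℝ)
    (ha : a.im ≠ 0) (hb : b.im ≠ 0)
    (hsphere : ¬(a.re = b.re ∧ ‖a.im‖ = ‖b.im‖)) :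
    ({x : Quaternion ℝ | x ^ 2 - x * (a + b) + a * b = 0}
      = {a, (b - star a)⁻¹ * b * (b - star a)}) ∧
    a ≠ (b - star a)⁻¹ * b * (b - star a) :=
  zero_set_different_spheres_general a b hsphere
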